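/- Let h > 0, σ > 0, ω ∈ ℝ with ω ≠ 0, and let α > 0. Then with ξ = −iα (so that e^{−iξh} = e^{−αh} and e^{iξh} = e^{αh}), the denominator 2 + i(σ/ω)(1 − e^{αh}) is nonzero and |ρ(σ, −iα, ω)| < 1; equivalently, |2 + i(σ/ω)(1 − e^{−αh})| < |2 + i(σ/ω)(1 − e^{αh})|. -/

import Mathlib

/-!
Write `s = σ/ω` and `x = αh`. Both the numerator and the denominator of `ρ(σ, −iα, ω)` are
`2 + i·(real number)`, namely `2 + i s (1 − e^{−x})` and `2 + i s (1 − e^{x})`, so the claim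
reduces to `|1 − e^{−x}| < |1 − e^{x}|`, which holds because `1 − e^{−x} = e^{−x}(e^{x} − 1)`
and `0 < e^{−x} < 1`.
-/

/-- The attenuation factor
`ρ(σ, ξ, ω) = (2 + i(σ/ω)(1 − e^{−iξh})) / (2 + i(σ/ω)(1 − e^{iξh}))`. -/
noncomputable def rho (σ : ℝ) (ξ : ℂ) (ω h : ℝ) : ℂ :=
  (2 + Complex.I * ((σ : ℂ) / (ω : ℂ)) * (1 - Complex.exp (-(Complex.I * ξ * (h : ℂ))))) /
  (2 + Complex.I * ((σ : ℂ) / (ω : ℂ)) * (1 - Complex.exp (Complex.I * ξ * (h : ℂ))))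

open Complex

theorem Complex.norm_ofReal_add_mul_I_lt {c a b : ℝ} (hab : |a| < |b|) :
    ‖(c : ℂ) + a * I‖ < ‖(c : ℂ) + b * I‖ := by
  rw [norm_add_mul_I, norm_add_mul_I]
  exact Real.sqrt_lt_sqrt (by positivity) (by linarith [sq_lt_sq.2 hab])

theorem Real.abs_one_sub_exp_neg_lt {x : ℝ} (hx : 0 < x) :
    |1 - Real.exp (-x)| < |1 - Real.exp x| := by
  have hexp : 1 < Real.exp x := Real.one_lt_exp_iff.2 hx
  have hexp_neg : Real.exp (-x) < 1 := Real.exp_lt_one_iff.2 (neg_neg_of_pos hx)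
  have hfactor : 1 - Real.exp (-x) = Real.exp (-x) * (Real.exp x - 1) := by
    rw [mul_sub, ← Real.exp_add, neg_add_cancel, Real.exp_zero, mul_one]
  rw [abs_of_pos (sub_pos.2 hexp_neg), abs_of_neg (sub_neg.2 hexp), neg_sub, hfactor]
  exact mul_lt_of_lt_one_left (sub_pos.2 hexp) hexp_neg

theorem Complex.two_add_I_mul_one_sub_exp (s y : ℝ) :
    2 + I * s * (1 - exp y) = ((2 : ℝ) : ℂ) + ((s * (1 - Real.exp y) : ℝ) : ℂ) * I := by
  push_cast
  ring

theorem Complex.norm_two_add_I_mul_one_sub_exp_neg_lt {s x : ℝ} (hs : s ≠ 0) (hx : 0 < x) :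
    ‖2 + I * s * (1 - exp (-x))‖ < ‖2 + I * s * (1 - exp x)‖ := by
  rw [← ofReal_neg, two_add_I_mul_one_sub_exp, two_add_I_mul_one_sub_exp]
  refine norm_ofReal_add_mul_I_lt ?_
  rw [abs_mul, abs_mul]
  exact mul_lt_mul_of_pos_left (Real.abs_one_sub_exp_neg_lt hx) (abs_pos.2 hs)

/-- for purely imaginary wavenumber `ξ = −iα` with `α > 0`, the attenuation
factor satisfies `|ρ(σ, −iα, ω)| < 1`; equivalently
`|2 + i(σ/ω)(1 − e^{−αh})| < |2 + i(σ/ω)(1 − e^{αh})|`. -/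
theorem stmt8 (h : ℝ) (hh : 0 < h) (σ : ℝ) (hσ : 0 < σ) (ω : ℝ) (hω : ω ≠ 0)
    (α : ℝ) (hα : 0 < α) :
    (2 + Complex.I * ((σ : ℂ) / (ω : ℂ)) * (1 - Complex.exp ((α : ℂ) * (h : ℂ))) ≠ 0) ∧
    ‖rho σ (-(Complex.I * (α : ℂ))) ω h‖ < 1 ∧
    ‖2 + Complex.I * ((σ : ℂ) / (ω : ℂ)) * (1 - Complex.exp (-(α : ℂ) * (h : ℂ)))‖ <
      ‖2 + Complex.I * ((σ : ℂ) / (ω : ℂ)) * (1 - Complex.exp ((α : ℂ) * (h : ℂ)))‖ := by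
  have hlt := norm_two_add_I_mul_one_sub_exp_neg_lt (div_ne_zero hσ.ne' hω) (mul_pos hα hh)
  push_cast at hlt
  rw [neg_mul]
  have hξ : I * -(I * α) * h = α * h := by linear_combination (-(α : ℂ) * h) * I_sq
  refine ⟨norm_pos_iff.1 ((norm_nonneg _).trans_lt hlt), ?_, hlt⟩
  rw [rho, hξ, norm_div, div_lt_one ((norm_nonneg _).trans_lt hlt)]
  exact hlt
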